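/- Assume mutual incoherence (Ψ_{jj}=1, max_{j'≠j}|Ψ_{jj'}| ≤ 1/(7αs), α > 1) and suppose Δ ∈ ℝ^{p×q} satisfies ‖Δ_{S*ᶜ}‖_{2,1} ≤ 3‖Δ_{S*}‖_{2,1} with |S*| ≤ s. Then ‖Δ_{S*}‖_F ≤ (α/(α−1))·4√s·‖ΨΔ‖_{2,∞}. -/

import Mathlib

open scoped BigOperators
open Matrix Classical

/-- Euclidean norm of a row. -/
noncomputable def rowNorm {q : ℕ} (v : Fin q → ℝ) : ℝ := Real.sqrt (∑ j, (v j) ^ 2)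

/-- `ℓ_{2,1}` norm: sum of row Euclidean norms. -/
noncomputable def norm21 {p q : ℕ} (B : Matrix (Fin p) (Fin q) ℝ) : ℝ :=
  ∑ j, rowNorm (B j)

/-- `ℓ_{2,∞}` norm: maximum of row Euclidean norms. -/
noncomputable def norm2inf {p q : ℕ} (B : Matrix (Fin p) (Fin q) ℝ) : ℝ :=
  ⨆ j, rowNorm (B j)

/-- Frobenius norm of a real matrix. -/
noncomputable def frob {n q : ℕ} (Z : Matrix (Fin n) (Fin q) ℝ) : ℝ :=
  Real.sqrt (∑ i, ∑ j, (Z i j) ^ 2)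

/-- Restriction of a matrix to a set of rows (zero outside `S`). -/
noncomputable def restrict {p q : ℕ} (B : Matrix (Fin p) (Fin q) ℝ) (S : Set (Fin p)) :
    Matrix (Fin p) (Fin q) ℝ :=
  fun j k => if j ∈ S then B j k else 0

/-- Mutual incoherence of the Gram matrix `Ψ = XᵀX/n`. -/
def MutualIncoherence {p : ℕ} (Ψ : Matrix (Fin p) (Fin p) ℝ) (α : ℝ) (s : ℕ) : Prop :=
  (∀ j, Ψ j j = 1) ∧ ∀ j j' : Fin p, j ≠ j' → |Ψ j j'| ≤ 1 / (7 * α * s)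

/-!
Write `r_j` for the Euclidean norm of row `j` of `Δ` and `μ = 1 / (7 α s)`. Because `Ψ` has unit
diagonal, row `j` of `Δ` is row `j` of `ΨΔ` minus `∑_{j' ≠ j} Ψ_{jj'} Δ_{j'}`, so the triangle
inequality gives `r_j ≤ ‖ΨΔ‖_{2,∞} + μ ‖Δ‖_{2,1}` for every row. Hence
`‖Δ_{S*}‖_F ≤ √s (‖ΨΔ‖_{2,∞} + μ ‖Δ‖_{2,1})`, while the cone condition and Cauchy–Schwarz give
`‖Δ‖_{2,1} ≤ 4 ‖Δ_{S*}‖_{2,1} ≤ 4 √s ‖Δ_{S*}‖_F`. Together,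
`‖Δ_{S*}‖_F ≤ √s ‖ΨΔ‖_{2,∞} + 4 / (7 α) ‖Δ_{S*}‖_F`, which is solved for `‖Δ_{S*}‖_F`.
-/

section RowNorms

variable {p q : ℕ}

lemma rowNorm_eq_norm (v : Fin q → ℝ) :
    rowNorm v = ‖(WithLp.toLp 2 v : EuclideanSpace ℝ (Fin q))‖ := by
  simp [rowNorm, EuclideanSpace.norm_eq]

lemma rowNorm_nonneg (v : Fin q → ℝ) : 0 ≤ rowNorm v := Real.sqrt_nonneg _

lemma norm21_nonneg (B : Matrix (Fin p) (Fin q) ℝ) : 0 ≤ norm21 B :=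
  Finset.sum_nonneg fun j _ => rowNorm_nonneg (B j)

lemma rowNorm_le_norm2inf (B : Matrix (Fin p) (Fin q) ℝ) (j : Fin p) :
    rowNorm (B j) ≤ norm2inf B :=
  le_ciSup (f := fun j => rowNorm (B j)) (Set.finite_range _).bddAbove j

lemma norm2inf_nonneg (B : Matrix (Fin p) (Fin q) ℝ) : 0 ≤ norm2inf B :=
  Real.iSup_nonneg fun j => rowNorm_nonneg (B j)

lemma frob_nonneg (B : Matrix (Fin p) (Fin q) ℝ) : 0 ≤ frob B := Real.sqrt_nonneg _

lemma frob_sq (B : Matrix (Fin p) (Fin q) ℝ) : frob B ^ 2 = ∑ j, rowNorm (B j) ^ 2 := by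
  simp only [frob, rowNorm]
  rw [Real.sq_sqrt (by positivity)]
  exact Finset.sum_congr rfl fun j _ => (Real.sq_sqrt (by positivity)).symm

lemma rowNorm_restrict (B : Matrix (Fin p) (Fin q) ℝ) (S : Set (Fin p)) (j : Fin p) :
    rowNorm (restrict B S j) = if j ∈ S then rowNorm (B j) else 0 := by
  by_cases hj : j ∈ S <;> simp [restrict, rowNorm, hj]

lemma norm21_restrict (B : Matrix (Fin p) (Fin q) ℝ) (S : Set (Fin p)) :
    norm21 (restrict B S) = ∑ j ∈ S.toFinset, rowNorm (B j) := by
  simp [norm21, rowNorm_restrict, Finset.sum_ite, Set.filter_mem_univ_eq_toFinset]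

lemma frob_restrict_sq (B : Matrix (Fin p) (Fin q) ℝ) (S : Set (Fin p)) :
    frob (restrict B S) ^ 2 = ∑ j ∈ S.toFinset, rowNorm (B j) ^ 2 := by
  simp [frob_sq, rowNorm_restrict, ite_pow, Finset.sum_ite, Set.filter_mem_univ_eq_toFinset]

lemma norm21_eq_restrict_add_restrict_compl (B : Matrix (Fin p) (Fin q) ℝ) (S : Set (Fin p)) :
    norm21 B = norm21 (restrict B S) + norm21 (restrict B Sᶜ) := by
  simp only [norm21, rowNorm_restrict, ← Finset.sum_add_distrib]
  exact Finset.sum_congr rfl fun j _ => by by_cases hj : j ∈ S <;> simp [hj]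

end RowNorms

section CauchySchwarz

variable {p q : ℕ}

lemma norm21_restrict_le_sqrt_ncard_mul_frob (B : Matrix (Fin p) (Fin q) ℝ) (S : Set (Fin p)) :
    norm21 (restrict B S) ≤ √(S.ncard : ℝ) * frob (restrict B S) := by
  refine (pow_le_pow_iff_left₀ (norm21_nonneg _) (by positivity [frob_nonneg (restrict B S)])
    two_ne_zero).1 ?_
  rw [mul_pow, Real.sq_sqrt (Nat.cast_nonneg _), frob_restrict_sq, norm21_restrict,
    Set.ncard_eq_toFinset_card']
  exact sq_sum_le_card_mul_sum_sq

lemma frob_restrict_le_sqrt_ncard_mul {B : Matrix (Fin p) (Fin q) ℝ} {S : Set (Fin p)} {b : ℝ}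
    (hb : 0 ≤ b) (hB : ∀ j ∈ S, rowNorm (B j) ≤ b) :
    frob (restrict B S) ≤ √(S.ncard : ℝ) * b := by
  refine (pow_le_pow_iff_left₀ (frob_nonneg _) (by positivity) two_ne_zero).1 ?_
  rw [mul_pow, Real.sq_sqrt (Nat.cast_nonneg _), frob_restrict_sq, Set.ncard_eq_toFinset_card',
    ← nsmul_eq_mul]
  refine Finset.sum_le_card_nsmul _ _ _ fun j hj => ?_
  exact pow_le_pow_left₀ (rowNorm_nonneg _) (hB j (Set.mem_toFinset.1 hj)) 2

end CauchySchwarz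

lemma norm_le_norm_sum_smul_add_mul_sum_norm {ι E : Type*} [Fintype ι] [DecidableEq ι]
    [SeminormedAddCommGroup E] [NormedSpace ℝ E] {Ψ : Matrix ι ι ℝ} {μ : ℝ} (hμ : 0 ≤ μ)
    (hdiag : ∀ j, Ψ j j = 1) (hoff : ∀ j j', j ≠ j' → |Ψ j j'| ≤ μ) (v : ι → E) (j : ι) :
    ‖v j‖ ≤ ‖∑ i, Ψ j i • v i‖ + μ * ∑ i, ‖v i‖ := by
  set w := ∑ i ∈ Finset.univ.erase j, Ψ j i • v i
  have hsplit : ∑ i, Ψ j i • v i = v j + w := by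
    rw [← Finset.add_sum_erase _ _ (Finset.mem_univ j), hdiag, one_smul]
  have hw : ‖w‖ ≤ μ * ∑ i, ‖v i‖ := calc
    ‖w‖ ≤ ∑ i ∈ Finset.univ.erase j, ‖Ψ j i • v i‖ := norm_sum_le _ _
    _ ≤ ∑ i ∈ Finset.univ.erase j, μ * ‖v i‖ := Finset.sum_le_sum fun i hi => by
      rw [norm_smul, Real.norm_eq_abs]
      exact mul_le_mul_of_nonneg_right (hoff j i (Finset.ne_of_mem_erase hi).symm) (norm_nonneg _)
    _ ≤ ∑ i, μ * ‖v i‖ := Finset.sum_le_sum_of_subset_of_nonneg (Finset.erase_subset _ _)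
      fun _ _ _ => by positivity
    _ = μ * ∑ i, ‖v i‖ := (Finset.mul_sum _ _ _).symm
  calc ‖v j‖ = ‖∑ i, Ψ j i • v i - w‖ := by rw [hsplit, add_sub_cancel_right]
    _ ≤ ‖∑ i, Ψ j i • v i‖ + ‖w‖ := norm_sub_le _ _
    _ ≤ ‖∑ i, Ψ j i • v i‖ + μ * ∑ i, ‖v i‖ := by gcongr

lemma rowNorm_le_rowNorm_mul_add_mul_norm21 {p q : ℕ} {Ψ : Matrix (Fin p) (Fin p) ℝ} {μ : ℝ}
    (hμ : 0 ≤ μ) (hdiag : ∀ j, Ψ j j = 1) (hoff : ∀ j j', j ≠ j' → |Ψ j j'| ≤ μ)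
    (Δ : Matrix (Fin p) (Fin q) ℝ) (j : Fin p) :
    rowNorm (Δ j) ≤ rowNorm ((Ψ * Δ) j) + μ * norm21 Δ := by
  have hrow : WithLp.toLp 2 ((Ψ * Δ) j) = ∑ i, Ψ j i • WithLp.toLp 2 (Δ i) := by
    rw [show (Ψ * Δ) j = Ψ j ᵥ* Δ from rfl, vecMul_eq_sum, WithLp.toLp_sum]
    rfl
  simpa only [rowNorm_eq_norm, norm21, hrow] using
    norm_le_norm_sum_smul_add_mul_sum_norm hμ hdiag hoff (fun i => WithLp.toLp 2 (Δ i)) j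

lemma le_mul_of_le_add_four_div_mul {α a F : ℝ} (hα : 1 < α) (hF : 0 ≤ F)
    (h : F ≤ a + 4 / (7 * α) * F) : F ≤ α / (α - 1) * 4 * a := by
  have hα1 : 0 < α - 1 := by linarith
  have h7 : 7 * α * F ≤ 7 * α * a + 4 * F := by
    have := mul_le_mul_of_nonneg_left h (by linarith : 0 ≤ 7 * α)
    rwa [mul_add, ← mul_assoc, mul_div_cancel₀ _ (by positivity)] at this
  rw [show α / (α - 1) * 4 * a = 4 * α * a / (α - 1) by ring, le_div_iff₀ hα1]
  nlinarith

lemma one_div_mul_mul_le_one_div {c x : ℝ} (hc : 0 < c) (hx : 0 ≤ x) :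
    1 / (c * x) * x ≤ 1 / c := by
  rcases hx.eq_or_lt with rfl | hx
  · simp only [mul_zero]; positivity
  · exact le_of_eq (by field_simp)

theorem frob_restriction_bound_general {n p q : ℕ}
    (X : Matrix (Fin n) (Fin p) ℝ) (α : ℝ) (hα : 1 < α) (s : ℕ)
    (hinc : MutualIncoherence ((1 / (n : ℝ)) • (Xᵀ * X)) α s)
    (Sstar : Set (Fin p)) (hcard : Sstar.ncard ≤ s)
    (Δ : Matrix (Fin p) (Fin q) ℝ)
    (hcone : norm21 (restrict Δ Sstarᶜ) ≤ 3 * norm21 (restrict Δ Sstar)) :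
    frob (restrict Δ Sstar) ≤
      (α / (α - 1)) * 4 * Real.sqrt s *
        norm2inf (((1 / (n : ℝ)) • (Xᵀ * X)) * Δ) := by
  set F := frob (restrict Δ Sstar)
  set M := norm2inf (((1 / (n : ℝ)) • (Xᵀ * X)) * Δ)
  set μ : ℝ := 1 / (7 * α * s)
  have hF0 : 0 ≤ F := frob_nonneg _
  have hμ : 0 ≤ μ := by positivity
  have hsqrt : √(Sstar.ncard : ℝ) ≤ √s := Real.sqrt_le_sqrt (by exact_mod_cast hcard)
  have hF : F ≤ √s * (M + μ * norm21 Δ) := by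
    have hb : 0 ≤ M + μ * norm21 Δ :=
      add_nonneg (norm2inf_nonneg _) (mul_nonneg hμ (norm21_nonneg Δ))
    refine (frob_restrict_le_sqrt_ncard_mul hb fun j _ => ?_).trans (by gcongr)
    exact (rowNorm_le_rowNorm_mul_add_mul_norm21 hμ hinc.1 hinc.2 Δ j).trans
      (by gcongr; exact rowNorm_le_norm2inf _ j)
  have hN : norm21 Δ ≤ 4 * (√s * F) := by
    have := (norm21_restrict_le_sqrt_ncard_mul_frob Δ Sstar).trans
      (mul_le_mul_of_nonneg_right hsqrt hF0)
    rw [norm21_eq_restrict_add_restrict_compl Δ Sstar]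
    linarith
  have hμs : μ * (√s * √s) ≤ 1 / (7 * α) := by
    rw [Real.mul_self_sqrt (Nat.cast_nonneg _)]
    exact one_div_mul_mul_le_one_div (by linarith) (Nat.cast_nonneg s)
  rw [mul_assoc _ √s M]
  refine le_mul_of_le_add_four_div_mul hα hF0 ?_
  calc F ≤ √s * M + μ * √s * norm21 Δ := by linarith
    _ ≤ √s * M + μ * √s * (4 * (√s * F)) := by gcongr
    _ = √s * M + 4 * (μ * (√s * √s)) * F := by ring
    _ ≤ √s * M + 4 * (1 / (7 * α)) * F := by gcongr
    _ = √s * M + 4 / (7 * α) * F := by ring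

/-- Under mutual incoherence and the cone condition,
`‖Δ_{S*}‖_F ≤ (α/(α−1))·4√s·‖ΨΔ‖_{2,∞}`. -/
theorem frob_restriction_bound {n p q : ℕ} (hn : 0 < n)
    (X : Matrix (Fin n) (Fin p) ℝ) (α : ℝ) (hα : 1 < α) (s : ℕ) (hs : 1 ≤ s)
    (hinc : MutualIncoherence ((1 / (n : ℝ)) • (Xᵀ * X)) α s)
    (Sstar : Set (Fin p)) (hcard : Sstar.ncard ≤ s)
    (Δ : Matrix (Fin p) (Fin q) ℝ)
    (hcone : norm21 (restrict Δ Sstarᶜ) ≤ 3 * norm21 (restrict Δ Sstar)) :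
    frob (restrict Δ Sstar) ≤
      (α / (α - 1)) * 4 * Real.sqrt s *
        norm2inf (((1 / (n : ℝ)) • (Xᵀ * X)) * Δ) :=
  frob_restriction_bound_general X α hα s hinc Sstar hcard Δ hcone
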